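/- arXiv:1602.02491 — 2 statements merged into one kernel-verified Lean document; each statement's English description precedes it below -/
import Mathlib

section
/- Condition (A-v) implies condition (A-iii): in the limiting regime m → ∞, if K₁(A)/K₂(A) → 0 then K₁(A)/Δ(A)² → 0, where Δ(A), K₁(A), K₂(A) are defined from positive semidefinite matrices Σ₁, Σ₂, a vector μ₁-μ₂, sample sizes n₁,n₂ → ∞, and a positive semidefinite matrix A as in the two-sample statistic. -/
/-! Cauchy–Schwarz for the Frobenius inner product gives `μ_Aᵀ Σ_{i,A} μ_A ≤ √tr(Σ_{i,A}²) Δ`,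
and `tr(Σ_{i,A}²) / nᵢ² ≤ K₁` because every term of `K₁` is the trace of a product of
positive semidefinite matrices, hence nonnegative. Together `K₂ ≤ 8 Δ √K₁`, that is
`K₁ / Δ² ≤ 64 (K₁ / K₂)²`. -/

open Matrix Filter

section
open scoped ComplexOrder

/-- The positive semidefinite square root of a positive semidefinite matrix
(the definition Mathlib had in December 2024, since removed). -/
noncomputable def Matrix.PosSemidef.sqrt {n 𝕜 : Type*} [Fintype n] [RCLike 𝕜] [DecidableEq n]
    {A : Matrix n n 𝕜} (hA : A.PosSemidef) : Matrix n n 𝕜 :=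
  hA.1.eigenvectorUnitary.1 * diagonal ((↑) ∘ (√·) ∘ hA.1.eigenvalues) *
  (star hA.1.eigenvectorUnitary : Matrix n n 𝕜)

end

namespace Matrix.PosSemidef

open scoped ComplexOrder MatrixOrder

variable {ι 𝕜 : Type*} [Fintype ι] [RCLike 𝕜]

lemma posSemidef_sqrt [DecidableEq ι] {A : Matrix ι ι 𝕜} (hA : A.PosSemidef) :
    hA.sqrt.PosSemidef := by
  have hD : (diagonal ((↑) ∘ (√·) ∘ hA.1.eigenvalues) : Matrix ι ι 𝕜).PosSemidef :=
    posSemidef_diagonal_iff.mpr fun i => by simp [Real.sqrt_nonneg]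
  simpa only [PosSemidef.sqrt, ← star_eq_conjTranspose, star_star] using
    hD.conjTranspose_mul_mul_same (star hA.1.eigenvectorUnitary : Matrix ι ι 𝕜)

lemma sqrt_mul_mul_sqrt [DecidableEq ι] {A B : Matrix ι ι 𝕜} (hA : A.PosSemidef)
    (hB : B.PosSemidef) : (hA.sqrt * B * hA.sqrt).PosSemidef := by
  simpa only [hA.posSemidef_sqrt.1.eq] using hB.conjTranspose_mul_mul_same hA.sqrt

lemma trace_mul_nonneg {M N : Matrix ι ι 𝕜} (hM : M.PosSemidef) (hN : N.PosSemidef) :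
    0 ≤ (M * N).trace := by
  classical
  obtain ⟨B, rfl⟩ := CStarAlgebra.nonneg_iff_eq_star_mul_self.mp hN.nonneg
  rw [← Matrix.mul_assoc, trace_mul_comm, ← Matrix.mul_assoc, star_eq_conjTranspose]
  exact (hM.mul_mul_conjTranspose_same B).trace_nonneg

end Matrix.PosSemidef

lemma sqrt_div_le_sqrt_div_mul_sub_one {a n : ℝ} (ha : 0 ≤ a) (hn : 1 < n) :
    √a / n ≤ √(a / (n * (n - 1))) := by
  have hn₀ : 0 < n := by linarith
  rw [← Real.sqrt_sq hn₀.le, ← Real.sqrt_div' a, Real.sqrt_sq hn₀.le]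
  gcongr
  · nlinarith
  · nlinarith

section TwoSample

variable {ι : Type*} [Fintype ι] {S₁ S₂ : Matrix ι ι ℝ} {n₁ n₂ : ℝ}

/-- Cauchy–Schwarz for the Frobenius inner product of `S` and `μ μᵀ`. -/
lemma dotProduct_mulVec_le_sqrt_trace_mul_self {S : Matrix ι ι ℝ} (hS : S.PosSemidef)
    (μ : ι → ℝ) : μ ⬝ᵥ (S *ᵥ μ) ≤ √((S * S).trace) * (μ ⬝ᵥ μ) := by
  have hq : μ ⬝ᵥ (S *ᵥ μ) = ∑ ij : ι × ι, S ij.1 ij.2 * (μ ij.1 * μ ij.2) := by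
    simp only [Fintype.sum_prod_type, dotProduct, mulVec, Finset.mul_sum]
    exact Finset.sum_congr rfl fun i _ => Finset.sum_congr rfl fun j _ => by ring
  have htr : (S * S).trace = ∑ ij : ι × ι, S ij.1 ij.2 ^ 2 := by
    simp only [Fintype.sum_prod_type, trace, diag, mul_apply]
    exact Finset.sum_congr rfl fun i _ => Finset.sum_congr rfl fun j _ => by
      rw [← hS.1.apply i j]; simp [sq]
  have hΔ : (μ ⬝ᵥ μ) ^ 2 = ∑ ij : ι × ι, (μ ij.1 * μ ij.2) ^ 2 := by
    simp only [Fintype.sum_prod_type, dotProduct, sq, Finset.sum_mul_sum]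
    exact Finset.sum_congr rfl fun i _ => Finset.sum_congr rfl fun j _ => by ring
  have hcs : (μ ⬝ᵥ (S *ᵥ μ)) ^ 2 ≤ (S * S).trace * (μ ⬝ᵥ μ) ^ 2 := by
    rw [hq, htr, hΔ]
    exact Finset.sum_mul_sq_le_sq_mul_sq Finset.univ _ _
  calc μ ⬝ᵥ (S *ᵥ μ) ≤ √((S * S).trace * (μ ⬝ᵥ μ) ^ 2) := Real.le_sqrt_of_sq_le hcs
    _ = √((S * S).trace) * (μ ⬝ᵥ μ) := by
      rw [Real.sqrt_mul (hS.trace_mul_nonneg hS), Real.sqrt_sq (by simpa using dotProduct_self_star_nonneg μ)]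

/-- `K₁(A)` of the two-sample statistic, with `S₁, S₂` standing for `Σ_{1,A}, Σ_{2,A}`. -/
noncomputable def twoSampleK₁ (S₁ S₂ : Matrix ι ι ℝ) (n₁ n₂ : ℝ) : ℝ :=
  2 * ((S₁ * S₁).trace / (n₁ * (n₁ - 1)) + (S₂ * S₂).trace / (n₂ * (n₂ - 1)))
    + 4 * (S₁ * S₂).trace / (n₁ * n₂)

/-- `K₂(A)` of the two-sample statistic, with `μ` standing for `μ_A`. -/
noncomputable def twoSampleK₂ (S₁ S₂ : Matrix ι ι ℝ) (μ : ι → ℝ) (n₁ n₂ : ℝ) : ℝ :=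
  4 * ((μ ⬝ᵥ (S₁ *ᵥ μ)) / n₁ + (μ ⬝ᵥ (S₂ *ᵥ μ)) / n₂)

lemma trace_mul_self_div_le_twoSampleK₁ (hS₁ : S₁.PosSemidef) (hS₂ : S₂.PosSemidef)
    (hn₁ : 1 < n₁) (hn₂ : 1 < n₂) :
    (S₁ * S₁).trace / (n₁ * (n₁ - 1)) ≤ twoSampleK₁ S₁ S₂ n₁ n₂ ∧
      (S₂ * S₂).trace / (n₂ * (n₂ - 1)) ≤ twoSampleK₁ S₁ S₂ n₁ n₂ := by
  have h₁ : 0 ≤ (S₁ * S₁).trace / (n₁ * (n₁ - 1)) :=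
    div_nonneg (hS₁.trace_mul_nonneg hS₁) (by nlinarith)
  have h₂ : 0 ≤ (S₂ * S₂).trace / (n₂ * (n₂ - 1)) :=
    div_nonneg (hS₂.trace_mul_nonneg hS₂) (by nlinarith)
  have h₁₂ : 0 ≤ 4 * (S₁ * S₂).trace / (n₁ * n₂) :=
    div_nonneg (by linarith [hS₁.trace_mul_nonneg hS₂]) (by nlinarith)
  constructor <;> (unfold twoSampleK₁; linarith)

lemma twoSampleK₁_nonneg (hS₁ : S₁.PosSemidef) (hS₂ : S₂.PosSemidef)
    (hn₁ : 1 < n₁) (hn₂ : 1 < n₂) : 0 ≤ twoSampleK₁ S₁ S₂ n₁ n₂ :=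
  (div_nonneg (hS₁.trace_mul_nonneg hS₁) (by nlinarith)).trans
    (trace_mul_self_div_le_twoSampleK₁ hS₁ hS₂ hn₁ hn₂).1

lemma dotProduct_mulVec_div_le {S : Matrix ι ι ℝ} (hS : S.PosSemidef) (μ : ι → ℝ)
    {n K : ℝ} (hn : 1 < n) (hK : (S * S).trace / (n * (n - 1)) ≤ K) :
    μ ⬝ᵥ (S *ᵥ μ) / n ≤ (μ ⬝ᵥ μ) * √K := by
  have hμ : 0 ≤ μ ⬝ᵥ μ := by simpa using dotProduct_self_star_nonneg μ
  calc μ ⬝ᵥ (S *ᵥ μ) / n ≤ √((S * S).trace) * (μ ⬝ᵥ μ) / n := by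
        gcongr
        exact dotProduct_mulVec_le_sqrt_trace_mul_self hS μ
    _ = (μ ⬝ᵥ μ) * (√((S * S).trace) / n) := by ring
    _ ≤ (μ ⬝ᵥ μ) * √K := by
        gcongr
        exact (sqrt_div_le_sqrt_div_mul_sub_one (hS.trace_mul_nonneg hS) hn).trans
          (Real.sqrt_le_sqrt hK)

lemma twoSampleK₂_le (hS₁ : S₁.PosSemidef) (hS₂ : S₂.PosSemidef) (μ : ι → ℝ)
    (hn₁ : 1 < n₁) (hn₂ : 1 < n₂) :
    twoSampleK₂ S₁ S₂ μ n₁ n₂ ≤ 8 * (μ ⬝ᵥ μ) * √(twoSampleK₁ S₁ S₂ n₁ n₂) := by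
  obtain ⟨hK₁, hK₂⟩ := trace_mul_self_div_le_twoSampleK₁ hS₁ hS₂ hn₁ hn₂
  have e₁ := dotProduct_mulVec_div_le hS₁ μ hn₁ hK₁
  have e₂ := dotProduct_mulVec_div_le hS₂ μ hn₂ hK₂
  unfold twoSampleK₂
  linarith

end TwoSample

lemma div_sq_le_sq_mul_div_sq {k₁ k₂ d c : ℝ} (hk₁ : 0 ≤ k₁) (hk₂ : 0 < k₂)
    (h : k₂ ≤ c * d * √k₁) : k₁ / d ^ 2 ≤ c ^ 2 * (k₁ / k₂) ^ 2 := by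
  rcases eq_or_ne d 0 with rfl | hd
  · rw [zero_pow two_ne_zero, div_zero]
    positivity
  have hsq : k₂ ^ 2 ≤ c ^ 2 * d ^ 2 * k₁ :=
    calc k₂ ^ 2 ≤ (c * d * √k₁) ^ 2 := pow_le_pow_left₀ hk₂.le h 2
      _ = c ^ 2 * d ^ 2 * k₁ := by rw [mul_pow, mul_pow, Real.sq_sqrt hk₁]
  rw [div_pow, ← mul_div_assoc, le_div_iff₀ (by positivity), div_mul_eq_mul_div,
    div_le_iff₀ (by positivity)]
  nlinarith [mul_le_mul_of_nonneg_left hsq hk₁]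

lemma tendsto_div_sq_of_le_mul_sqrt {α : Type*} {l : Filter α} {k₁ k₂ d : α → ℝ} (c : ℝ)
    (hk₁ : ∀ a, 0 ≤ k₁ a) (hk₂ : ∀ a, 0 < k₂ a) (h : ∀ a, k₂ a ≤ c * d a * √(k₁ a))
    (hlim : Tendsto (fun a => k₁ a / k₂ a) l (nhds 0)) :
    Tendsto (fun a => k₁ a / d a ^ 2) l (nhds 0) := by
  have hbound : Tendsto (fun a => c ^ 2 * (k₁ a / k₂ a) ^ 2) l (nhds 0) := by
    simpa using (hlim.pow 2).const_mul (c ^ 2)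
  exact tendsto_of_tendsto_of_tendsto_of_le_of_le tendsto_const_nhds hbound
    (fun a => div_nonneg (hk₁ a) (sq_nonneg _))
    (fun a => div_sq_le_sq_mul_div_sq (hk₁ a) (hk₂ a) (h a))

theorem Av_implies_Aiii_general
    (pd : ℕ → ℕ)
    (n₁ n₂ : ℕ → ℝ) (hn₁ : ∀ m, 2 ≤ n₁ m) (hn₂ : ∀ m, 2 ≤ n₂ m)
    (A Sig₁ Sig₂ : ∀ m, Matrix (Fin (pd m)) (Fin (pd m)) ℝ)
    (hA : ∀ m, (A m).PosSemidef)
    (hSig₁ : ∀ m, (Sig₁ m).PosSemidef) (hSig₂ : ∀ m, (Sig₂ m).PosSemidef)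
    (μ₁ μ₂ : ∀ m, Fin (pd m) → ℝ) :
    let μA : ∀ m, Fin (pd m) → ℝ := fun m => (hA m).sqrt *ᵥ (μ₁ m - μ₂ m)
    let S₁ : ∀ m, Matrix (Fin (pd m)) (Fin (pd m)) ℝ :=
      fun m => (hA m).sqrt * Sig₁ m * (hA m).sqrt
    let S₂ : ∀ m, Matrix (Fin (pd m)) (Fin (pd m)) ℝ :=
      fun m => (hA m).sqrt * Sig₂ m * (hA m).sqrt
    let Δ : ℕ → ℝ := fun m => μA m ⬝ᵥ μA m
    let K₁ : ℕ → ℝ := fun m =>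
      2 * ((S₁ m * S₁ m).trace / (n₁ m * (n₁ m - 1))
            + (S₂ m * S₂ m).trace / (n₂ m * (n₂ m - 1)))
        + 4 * (S₁ m * S₂ m).trace / (n₁ m * n₂ m)
    let K₂ : ℕ → ℝ := fun m =>
      4 * ((μA m ⬝ᵥ (S₁ m *ᵥ μA m)) / n₁ m + (μA m ⬝ᵥ (S₂ m *ᵥ μA m)) / n₂ m)
    (∀ m, 0 < Δ m) → (∀ m, 0 < K₂ m) →
      Tendsto (fun m => K₁ m / K₂ m) atTop (nhds 0) →
      Tendsto (fun m => K₁ m / (Δ m) ^ 2) atTop (nhds 0) := by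
  intro μA S₁ S₂ Δ K₁ K₂ _ hK₂ hlim
  have hS₁ m : (S₁ m).PosSemidef := (hA m).sqrt_mul_mul_sqrt (hSig₁ m)
  have hS₂ m : (S₂ m).PosSemidef := (hA m).sqrt_mul_mul_sqrt (hSig₂ m)
  have hn₁' m : 1 < n₁ m := by linarith [hn₁ m]
  have hn₂' m : 1 < n₂ m := by linarith [hn₂ m]
  exact tendsto_div_sq_of_le_mul_sqrt 8
    (fun m => twoSampleK₁_nonneg (hS₁ m) (hS₂ m) (hn₁' m) (hn₂' m)) hK₂
    (fun m => twoSampleK₂_le (hS₁ m) (hS₂ m) (μA m) (hn₁' m) (hn₂' m)) hlim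

/-- Proposition 1: condition (A-v) implies condition (A-iii). In the limiting
regime `m → ∞` (with `p, n₁, n₂ → ∞`), if `K₁(A)/K₂(A) → 0` then
`K₁(A)/Δ(A)² → 0`. -/
theorem Av_implies_Aiii
    (pd : ℕ → ℕ) (hpd : Tendsto pd atTop atTop)
    (n₁ n₂ : ℕ → ℝ) (hn₁ : ∀ m, 2 ≤ n₁ m) (hn₂ : ∀ m, 2 ≤ n₂ m)
    (hn₁top : Tendsto n₁ atTop atTop) (hn₂top : Tendsto n₂ atTop atTop)
    (A Sig₁ Sig₂ : ∀ m, Matrix (Fin (pd m)) (Fin (pd m)) ℝ)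
    (hA : ∀ m, (A m).PosSemidef)
    (hSig₁ : ∀ m, (Sig₁ m).PosSemidef) (hSig₂ : ∀ m, (Sig₂ m).PosSemidef)
    (μ₁ μ₂ : ∀ m, Fin (pd m) → ℝ) :
    let μA : ∀ m, Fin (pd m) → ℝ := fun m => (hA m).sqrt *ᵥ (μ₁ m - μ₂ m)
    let S₁ : ∀ m, Matrix (Fin (pd m)) (Fin (pd m)) ℝ :=
      fun m => (hA m).sqrt * Sig₁ m * (hA m).sqrt
    let S₂ : ∀ m, Matrix (Fin (pd m)) (Fin (pd m)) ℝ :=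
      fun m => (hA m).sqrt * Sig₂ m * (hA m).sqrt
    let Δ : ℕ → ℝ := fun m => μA m ⬝ᵥ μA m
    let K₁ : ℕ → ℝ := fun m =>
      2 * ((S₁ m * S₁ m).trace / (n₁ m * (n₁ m - 1))
            + (S₂ m * S₂ m).trace / (n₂ m * (n₂ m - 1)))
        + 4 * (S₁ m * S₂ m).trace / (n₁ m * n₂ m)
    let K₂ : ℕ → ℝ := fun m =>
      4 * ((μA m ⬝ᵥ (S₁ m *ᵥ μA m)) / n₁ m + (μA m ⬝ᵥ (S₂ m *ᵥ μA m)) / n₂ m)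
    (∀ m, 0 < Δ m) → (∀ m, 0 < K₂ m) →
      Tendsto (fun m => K₁ m / K₂ m) atTop (nhds 0) →
      Tendsto (fun m => K₁ m / (Δ m) ^ 2) atTop (nhds 0) :=
  Av_implies_Aiii_general pd n₁ n₂ hn₁ hn₂ A Sig₁ Sig₂ hA hSig₁ hSig₂ μ₁ μ₂
end

section
/- Under conditions (A-ii) and (A-iv), K(A)/K₁(A) → 1 as m → ∞; that is, if λ_max(Σ_{i,A})²/tr(Σ_{i,A}²) → 0 for i = 1,2 and limsup Δ(A)²/K₁(A) < ∞, then K₂(A)/K₁(A) → 0. -/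
open Matrix Filter

/-
Each term `μᵀ Σ μ / n` of `K₂` is at most `λ_max(Σ) Δ / n`. Since `tr(Σ²) / n² ≤ K₁` (all terms
of `K₁` are nonnegative, `tr(Σ₁ Σ₂)` included) and `Δ² ≤ C K₁`, squaring gives
`(μᵀ Σ μ / (n K₁))² ≤ C λ_max(Σ)² / tr(Σ²)`, which tends to `0`.
-/

namespace Matrix

variable {n : Type*} [Fintype n] [DecidableEq n]

section RCLike

open scoped ComplexOrder

variable {𝕜 : Type*} [RCLike 𝕜]

lemma PosSemidef.sqrt_isHermitian {A : Matrix n n 𝕜} (hA : A.PosSemidef) :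
    hA.sqrt.IsHermitian := by
  simp [IsHermitian, PosSemidef.sqrt, conjTranspose_mul, star_eq_conjTranspose,
    diagonal_conjTranspose, mul_assoc, Function.comp_def, Pi.star_def, RCLike.star_def]

lemma PosSemidef.sqrt_mul_mul_sqrt_s11 {A B : Matrix n n 𝕜} (hA : A.PosSemidef)
    (hB : B.PosSemidef) : (hA.sqrt * B * hA.sqrt).PosSemidef := by
  simpa only [hA.sqrt_isHermitian.eq] using hB.mul_mul_conjTranspose_same hA.sqrt

end RCLike

namespace IsHermitian

variable {M : Matrix n n ℝ}

lemma eigenvectorUnitary_transpose_mul_self (hM : M.IsHermitian) :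
    (hM.eigenvectorUnitary : Matrix n n ℝ)ᵀ * hM.eigenvectorUnitary = 1 := by
  simpa [star_eq_conjTranspose] using mem_unitaryGroup_iff'.mp hM.eigenvectorUnitary.2

lemma eigenvectorUnitary_mul_transpose_self (hM : M.IsHermitian) :
    (hM.eigenvectorUnitary : Matrix n n ℝ) * (hM.eigenvectorUnitary : Matrix n n ℝ)ᵀ = 1 := by
  simpa [star_eq_conjTranspose] using mem_unitaryGroup_iff.mp hM.eigenvectorUnitary.2

lemma spectral_theorem_real (hM : M.IsHermitian) :
    M = hM.eigenvectorUnitary * diagonal hM.eigenvalues *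
      (hM.eigenvectorUnitary : Matrix n n ℝ)ᵀ := by
  conv_lhs => rw [hM.spectral_theorem]
  simp [Unitary.conjStarAlgAut_apply, star_eq_conjTranspose]

lemma dotProduct_mulVec_eq_sum (hM : M.IsHermitian) (x : n → ℝ) :
    x ⬝ᵥ (M *ᵥ x) =
      ∑ i, hM.eigenvalues i * ((hM.eigenvectorUnitary : Matrix n n ℝ)ᵀ *ᵥ x) i ^ 2 := by
  conv_lhs => rw [hM.spectral_theorem_real]
  rw [← mulVec_mulVec, ← mulVec_mulVec, dotProduct_mulVec, ← mulVec_transpose]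
  simp only [dotProduct, mulVec_diagonal]
  exact Finset.sum_congr rfl fun i _ => by ring

lemma dotProduct_self_eq_sum (hM : M.IsHermitian) (x : n → ℝ) :
    x ⬝ᵥ x = ∑ i, ((hM.eigenvectorUnitary : Matrix n n ℝ)ᵀ *ᵥ x) i ^ 2 := by
  have hx : x = hM.eigenvectorUnitary *ᵥ ((hM.eigenvectorUnitary : Matrix n n ℝ)ᵀ *ᵥ x) := by
    rw [mulVec_mulVec, hM.eigenvectorUnitary_mul_transpose_self, one_mulVec]
  conv_lhs => enter [1]; rw [hx]
  rw [dotProduct_comm, dotProduct_mulVec, ← mulVec_transpose]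
  simp only [dotProduct, sq]

lemma trace_mul_self_eq_sum (hM : M.IsHermitian) :
    (M * M).trace = ∑ i, hM.eigenvalues i ^ 2 := by
  set U : Matrix n n ℝ := (hM.eigenvectorUnitary : Matrix n n ℝ)
  have hUU : Uᵀ * U = 1 := hM.eigenvectorUnitary_transpose_mul_self
  have hMM : M * M = U * (diagonal hM.eigenvalues * diagonal hM.eigenvalues) * Uᵀ := by
    conv_lhs => rw [hM.spectral_theorem_real]
    simp only [mul_assoc]
    rw [← mul_assoc Uᵀ U, hUU, one_mul]
  rw [hMM, trace_mul_cycle, ← mul_assoc, hUU, one_mul, diagonal_mul_diagonal, trace_diagonal]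
  simp only [sq]

lemma dotProduct_mulVec_le_iSup_eigenvalues_mul (hM : M.IsHermitian) (x : n → ℝ) :
    x ⬝ᵥ (M *ᵥ x) ≤ (⨆ i, hM.eigenvalues i) * (x ⬝ᵥ x) := by
  rw [hM.dotProduct_mulVec_eq_sum, hM.dotProduct_self_eq_sum, Finset.mul_sum]
  exact Finset.sum_le_sum fun i _ => mul_le_mul_of_nonneg_right
    (le_ciSup (Set.finite_range _).bddAbove i) (sq_nonneg _)

lemma iSup_eigenvalues_le_sqrt_trace_mul_self (hM : M.IsHermitian) :
    ⨆ i, hM.eigenvalues i ≤ √(M * M).trace := by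
  refine Real.iSup_le (fun i => Real.le_sqrt_of_sq_le ?_) (Real.sqrt_nonneg _)
  rw [hM.trace_mul_self_eq_sum]
  exact Finset.single_le_sum (f := fun i => hM.eigenvalues i ^ 2) (fun j _ => sq_nonneg _)
    (Finset.mem_univ i)

end IsHermitian

namespace PosSemidef

variable {A B : Matrix n n ℝ}

lemma trace_mul_nonneg_s11 (hA : A.PosSemidef) (hB : B.PosSemidef) : 0 ≤ (A * B).trace := by
  set U : Matrix n n ℝ := (hB.1.eigenvectorUnitary : Matrix n n ℝ)
  have hUAU : (Uᵀ * A * U).PosSemidef := by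
    simpa only [conjTranspose_eq_transpose_of_trivial] using hA.conjTranspose_mul_mul_same U
  have hAB : (A * B).trace = (Uᵀ * A * U * diagonal hB.1.eigenvalues).trace := by
    calc (A * B).trace = (A * U * diagonal hB.1.eigenvalues * Uᵀ).trace := by
          conv_lhs => rw [hB.1.spectral_theorem_real]
          simp only [U, mul_assoc]
      _ = (Uᵀ * (A * U * diagonal hB.1.eigenvalues)).trace := trace_mul_comm _ _
      _ = (Uᵀ * A * U * diagonal hB.1.eigenvalues).trace := by simp only [mul_assoc]
  rw [hAB]
  simp only [trace, diag, mul_diagonal]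
  exact Finset.sum_nonneg fun i _ => mul_nonneg hUAU.diag_nonneg (hB.eigenvalues_nonneg i)

lemma sq_iSup_eigenvalues_le_trace_mul_self (hA : A.PosSemidef) :
    (⨆ i, hA.1.eigenvalues i) ^ 2 ≤ (A * A).trace :=
  (Real.le_sqrt (Real.iSup_nonneg hA.eigenvalues_nonneg) (hA.trace_mul_nonneg_s11 hA)).mp
    hA.1.iSup_eigenvalues_le_sqrt_trace_mul_self

lemma sq_dotProduct_mulVec_div_le {S : Matrix n n ℝ} (hS : S.PosSemidef) (x : n → ℝ)
    {N K C : ℝ} (hN : 1 < N) (hK : 0 < K) (htr : (S * S).trace / (N * (N - 1)) ≤ K)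
    (hx : (x ⬝ᵥ x) ^ 2 ≤ C * K) :
    (x ⬝ᵥ (S *ᵥ x) / N / K) ^ 2 ≤ C * ((⨆ i, hS.1.eigenvalues i) ^ 2 / (S * S).trace) := by
  set lmax := ⨆ i, hS.1.eigenvalues i
  set t := (S * S).trace
  have hmax : lmax ^ 2 ≤ t := hS.sq_iSup_eigenvalues_le_trace_mul_self
  have ht : t ≤ N ^ 2 * K := by
    rw [div_le_iff₀ (by nlinarith)] at htr
    nlinarith
  have hq : 0 ≤ x ⬝ᵥ (S *ᵥ x) := by simpa using hS.dotProduct_mulVec_nonneg x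
  have hCK : 0 ≤ C * K := (sq_nonneg _).trans hx
  have hlt : lmax ^ 2 / t * t = lmax ^ 2 :=
    div_mul_cancel_of_imp fun h => le_antisymm (h ▸ hmax) (sq_nonneg _)
  calc (x ⬝ᵥ (S *ᵥ x) / N / K) ^ 2 ≤ (lmax * (x ⬝ᵥ x) / N / K) ^ 2 := by
        gcongr
        exact hS.1.dotProduct_mulVec_le_iSup_eigenvalues_mul x
    _ = lmax ^ 2 / t * t * (x ⬝ᵥ x) ^ 2 / (N ^ 2 * K ^ 2) := by rw [hlt]; ring
    _ ≤ lmax ^ 2 / t * (N ^ 2 * K) * (C * K) / (N ^ 2 * K ^ 2) := by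
        have hratio : 0 ≤ lmax ^ 2 / t := div_nonneg (sq_nonneg _) ((sq_nonneg _).trans hmax)
        gcongr
    _ = C * (lmax ^ 2 / t) := by field_simp

end PosSemidef
end Matrix

lemma Filter.Tendsto.of_sq_le_const_mul {α : Type*} {l : Filter α} {f r : α → ℝ} {C : ℝ}
    (hr : Tendsto r l (nhds 0)) (hf : ∀ᶠ a in l, 0 ≤ f a)
    (hfr : ∀ᶠ a in l, f a ^ 2 ≤ C * r a) : Tendsto f l (nhds 0) := by
  have hbound : Tendsto (fun a => √(C * r a)) l (nhds 0) := by
    simpa using (hr.const_mul C).sqrt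
  refine squeeze_zero' hf ?_ hbound
  filter_upwards [hf, hfr] with a h0 h
  exact Real.le_sqrt_of_sq_le h

lemma Filter.Tendsto.dotProduct_mulVec_div_div_of_posSemidef {ι : Type*} {l : Filter ι}
    {d : ι → Type*} [∀ m, Fintype (d m)] [∀ m, DecidableEq (d m)]
    {S : ∀ m, Matrix (d m) (d m) ℝ} (hS : ∀ m, (S m).PosSemidef)
    (hr : Tendsto (fun m => (⨆ i, (hS m).1.eigenvalues i) ^ 2 / (S m * S m).trace) l (nhds 0))
    (x : ∀ m, d m → ℝ) {N K : ι → ℝ} {C : ℝ} (hN : ∀ m, 1 < N m) (hK : ∀ m, 0 < K m)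
    (htr : ∀ m, (S m * S m).trace / (N m * (N m - 1)) ≤ K m)
    (hx : ∀ᶠ m in l, (x m ⬝ᵥ x m) ^ 2 ≤ C * K m) :
    Tendsto (fun m => x m ⬝ᵥ (S m *ᵥ x m) / N m / K m) l (nhds 0) :=
  hr.of_sq_le_const_mul
    (.of_forall fun m => div_nonneg (div_nonneg
      (by simpa using (hS m).dotProduct_mulVec_nonneg (x m)) (by linarith [hN m])) (hK m).le)
    (hx.mono fun m h => (hS m).sq_dotProduct_mulVec_div_le (x m) (hN m) (hK m) (htr m) h)

theorem K2_div_K1_tendsto_zero_general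
    (pd : ℕ → ℕ)
    (n₁ n₂ : ℕ → ℝ) (hn₁ : ∀ m, 2 ≤ n₁ m) (hn₂ : ∀ m, 2 ≤ n₂ m)
    (A Sig₁ Sig₂ : ∀ m, Matrix (Fin (pd m)) (Fin (pd m)) ℝ)
    (hA : ∀ m, (A m).PosSemidef)
    (hSig₁ : ∀ m, (Sig₁ m).PosSemidef) (hSig₂ : ∀ m, (Sig₂ m).PosSemidef)
    (μ₁ μ₂ : ∀ m, Fin (pd m) → ℝ)
    (hH₁ : ∀ m, ((hA m).sqrt * Sig₁ m * (hA m).sqrt).IsHermitian)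
    (hH₂ : ∀ m, ((hA m).sqrt * Sig₂ m * (hA m).sqrt).IsHermitian) :
    let μA : ∀ m, Fin (pd m) → ℝ := fun m => (hA m).sqrt *ᵥ (μ₁ m - μ₂ m)
    let S₁ : ∀ m, Matrix (Fin (pd m)) (Fin (pd m)) ℝ :=
      fun m => (hA m).sqrt * Sig₁ m * (hA m).sqrt
    let S₂ : ∀ m, Matrix (Fin (pd m)) (Fin (pd m)) ℝ :=
      fun m => (hA m).sqrt * Sig₂ m * (hA m).sqrt
    let Δ : ℕ → ℝ := fun m => μA m ⬝ᵥ μA m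
    let K₁ : ℕ → ℝ := fun m =>
      2 * ((S₁ m * S₁ m).trace / (n₁ m * (n₁ m - 1))
            + (S₂ m * S₂ m).trace / (n₂ m * (n₂ m - 1)))
        + 4 * (S₁ m * S₂ m).trace / (n₁ m * n₂ m)
    let K₂ : ℕ → ℝ := fun m =>
      4 * ((μA m ⬝ᵥ (S₁ m *ᵥ μA m)) / n₁ m + (μA m ⬝ᵥ (S₂ m *ᵥ μA m)) / n₂ m)
    (∀ m, 0 < K₁ m) →
    Tendsto (fun m => (⨆ i, (hH₁ m).eigenvalues i) ^ 2 / (S₁ m * S₁ m).trace)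
      atTop (nhds 0) →
    Tendsto (fun m => (⨆ i, (hH₂ m).eigenvalues i) ^ 2 / (S₂ m * S₂ m).trace)
      atTop (nhds 0) →
    (∃ C : ℝ, ∀ᶠ m in atTop, (Δ m) ^ 2 / K₁ m ≤ C) →
    Tendsto (fun m => K₂ m / K₁ m) atTop (nhds 0) := by
  intro μA S₁ S₂ Δ K₁ K₂ hK₁ hr₁ hr₂ ⟨C, hC⟩
  have hS₁ : ∀ m, (S₁ m).PosSemidef := fun m => (hA m).sqrt_mul_mul_sqrt_s11 (hSig₁ m)
  have hS₂ : ∀ m, (S₂ m).PosSemidef := fun m => (hA m).sqrt_mul_mul_sqrt_s11 (hSig₂ m)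
  have hΔ : ∀ᶠ m in atTop, Δ m ^ 2 ≤ C * K₁ m :=
    hC.mono fun m h => (div_le_iff₀ (hK₁ m)).mp h
  have hK₁_bound : ∀ m, (S₁ m * S₁ m).trace / (n₁ m * (n₁ m - 1)) ≤ K₁ m ∧
      (S₂ m * S₂ m).trace / (n₂ m * (n₂ m - 1)) ≤ K₁ m := by
    intro m
    have h₁ : 0 ≤ (S₁ m * S₁ m).trace / (n₁ m * (n₁ m - 1)) :=
      div_nonneg ((hS₁ m).trace_mul_nonneg_s11 (hS₁ m)) (by nlinarith [hn₁ m])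
    have h₂ : 0 ≤ (S₂ m * S₂ m).trace / (n₂ m * (n₂ m - 1)) :=
      div_nonneg ((hS₂ m).trace_mul_nonneg_s11 (hS₂ m)) (by nlinarith [hn₂ m])
    have h₁₂ : 0 ≤ 4 * (S₁ m * S₂ m).trace / (n₁ m * n₂ m) :=
      div_nonneg (mul_nonneg zero_le_four ((hS₁ m).trace_mul_nonneg_s11 (hS₂ m)))
        (by nlinarith [hn₁ m, hn₂ m])
    constructor <;> linarith
  have h₁ := hr₁.dotProduct_mulVec_div_div_of_posSemidef (S := S₁) hS₁ μA
    (fun m => by linarith [hn₁ m]) hK₁ (fun m => (hK₁_bound m).1) hΔ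
  have h₂ := hr₂.dotProduct_mulVec_div_div_of_posSemidef (S := S₂) hS₂ μA
    (fun m => by linarith [hn₂ m]) hK₁ (fun m => (hK₁_bound m).2) hΔ
  have hK : (fun m => K₂ m / K₁ m) = fun m => 4 * (μA m ⬝ᵥ (S₁ m *ᵥ μA m) / n₁ m / K₁ m
      + μA m ⬝ᵥ (S₂ m *ᵥ μA m) / n₂ m / K₁ m) := by
    funext m
    simp only [K₂]
    ring
  simpa [hK] using (h₁.add h₂).const_mul 4

/-- Lemma 1: under (A-ii) and (A-iv), `K(A)/K₁(A) → 1` as `m → ∞`; i.e. if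
`λ_max(Σ_{i,A})²/tr(Σ_{i,A}²) → 0` for `i = 1,2` and `limsup Δ(A)²/K₁(A) < ∞`,
then `K₂(A)/K₁(A) → 0`. -/
theorem K2_div_K1_tendsto_zero
    (pd : ℕ → ℕ) (hp : ∀ m, 0 < pd m) (hpdtop : Tendsto pd atTop atTop)
    (n₁ n₂ : ℕ → ℝ) (hn₁ : ∀ m, 2 ≤ n₁ m) (hn₂ : ∀ m, 2 ≤ n₂ m)
    (hn₁top : Tendsto n₁ atTop atTop) (hn₂top : Tendsto n₂ atTop atTop)
    (A Sig₁ Sig₂ : ∀ m, Matrix (Fin (pd m)) (Fin (pd m)) ℝ)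
    (hA : ∀ m, (A m).PosSemidef)
    (hSig₁ : ∀ m, (Sig₁ m).PosSemidef) (hSig₂ : ∀ m, (Sig₂ m).PosSemidef)
    (μ₁ μ₂ : ∀ m, Fin (pd m) → ℝ)
    (hH₁ : ∀ m, ((hA m).sqrt * Sig₁ m * (hA m).sqrt).IsHermitian)
    (hH₂ : ∀ m, ((hA m).sqrt * Sig₂ m * (hA m).sqrt).IsHermitian) :
    let μA : ∀ m, Fin (pd m) → ℝ := fun m => (hA m).sqrt *ᵥ (μ₁ m - μ₂ m)
    let S₁ : ∀ m, Matrix (Fin (pd m)) (Fin (pd m)) ℝ :=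
      fun m => (hA m).sqrt * Sig₁ m * (hA m).sqrt
    let S₂ : ∀ m, Matrix (Fin (pd m)) (Fin (pd m)) ℝ :=
      fun m => (hA m).sqrt * Sig₂ m * (hA m).sqrt
    let Δ : ℕ → ℝ := fun m => μA m ⬝ᵥ μA m
    let K₁ : ℕ → ℝ := fun m =>
      2 * ((S₁ m * S₁ m).trace / (n₁ m * (n₁ m - 1))
            + (S₂ m * S₂ m).trace / (n₂ m * (n₂ m - 1)))
        + 4 * (S₁ m * S₂ m).trace / (n₁ m * n₂ m)
    let K₂ : ℕ → ℝ := fun m =>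
      4 * ((μA m ⬝ᵥ (S₁ m *ᵥ μA m)) / n₁ m + (μA m ⬝ᵥ (S₂ m *ᵥ μA m)) / n₂ m)
    (∀ m, 0 < K₁ m) →
    Tendsto (fun m => (⨆ i, (hH₁ m).eigenvalues i) ^ 2 / (S₁ m * S₁ m).trace)
      atTop (nhds 0) →
    Tendsto (fun m => (⨆ i, (hH₂ m).eigenvalues i) ^ 2 / (S₂ m * S₂ m).trace)
      atTop (nhds 0) →
    (∃ C : ℝ, ∀ᶠ m in atTop, (Δ m) ^ 2 / K₁ m ≤ C) →
    Tendsto (fun m => K₂ m / K₁ m) atTop (nhds 0) :=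
  K2_div_K1_tendsto_zero_general pd n₁ n₂ hn₁ hn₂ A Sig₁ Sig₂ hA hSig₁ hSig₂ μ₁ μ₂ hH₁ hH₂
end
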